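/- arXiv:math/0507369 — 3 statements merged into one kernel-verified Lean document; each statement's English description precedes it below -/
import Mathlib

section
/- Let l ≤ k be positive integers, let f be a dimension function such that g(r) := r^{-l} f(r) is also a dimension function, let A ⊆ ℝ^k be a Borel set with finite Hausdorff f-measure, and let φ : A → ℝ^l be a Lipschitz map. Then the upper integral over y ∈ ℝ^l of H^g(A ∩ φ^{-1}{y}) with respect to l-dimensional Lebesgue measure is at most α(l) · 2^l · Lip(φ)^l · H^f(A), where α(l) is the volume of the l-dimensional unit ball. -/
open MeasureTheory Set Filter
open scoped ENNReal NNReal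

def IsDimFun (f : ℝ → ℝ) : Prop :=
  ContinuousOn f (Set.Ici 0) ∧ MonotoneOn f (Set.Ici 0) ∧
    (∀ r, 0 ≤ r → 0 ≤ f r) ∧ Filter.Tendsto f (nhdsWithin 0 (Set.Ioi 0)) (nhds 0)

noncomputable def hMeasure {X : Type*} [EMetricSpace X] [MeasurableSpace X] [BorelSpace X]
    (f : ℝ → ℝ) : Measure X :=
  Measure.mkMetric (fun d => ENNReal.ofReal (f d.toReal))

/-- The upper integral of a (not necessarily measurable) function. -/
noncomputable def upperLintegral {α : Type*} [MeasurableSpace α] (μ : Measure α)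
    (f : α → ℝ≥0∞) : ℝ≥0∞ :=
  ⨅ (g : α → ℝ≥0∞) (_ : Measurable g) (_ : f ≤ g), ∫⁻ x, g x ∂μ

/-! Cover `A` by countably many small sets `t j` with `∑ f (diam t j)` close to `H^f(A)`. The
fiber `A ∩ φ⁻¹{y}` is covered by the `t j` with `y ∈ φ (t j ∩ A)`, so `H^g` of the fiber is at most
the liminf, over finer and finer covers, of `∑ j, g (diam t j) · 1_{φ (t j ∩ A)} y`. Integrating,
each term is at most `g(d) · α (K d)^l = α K^l f(d)` because `φ (t j ∩ A)` lies in a ball of radius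
`K d`, `d = diam t j`; Fatou's lemma concludes. -/

open Metric Module
open scoped Topology

theorem IsDimFun.apply_zero {f : ℝ → ℝ} (hf : IsDimFun f) : f 0 = 0 :=
  tendsto_nhds_unique
    ((hf.1 0 self_mem_Ici).mono_left (nhdsWithin_mono 0 Ioi_subset_Ici_self)) hf.2.2.2

theorem upperLintegral_le_liminf_lintegral {α : Type*} [MeasurableSpace α] {μ : Measure α}
    {f : α → ℝ≥0∞} {h : ℕ → α → ℝ≥0∞} (hh : ∀ n, Measurable (h n))
    (hf : ∀ x, f x ≤ liminf (fun n => h n x) atTop) :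
    upperLintegral μ f ≤ liminf (fun n => ∫⁻ x, h n x ∂μ) atTop :=
  (iInf₂_le_of_le _ (Measurable.liminf hh) (iInf_le_of_le hf le_rfl)).trans
    (lintegral_liminf_le hh)

theorem Measure.exists_cover_tsum_lt_of_mkMetric_lt {X : Type*} [EMetricSpace X]
    [MeasurableSpace X] [BorelSpace X] {m : ℝ≥0∞ → ℝ≥0∞} {s : Set X} {r a : ℝ≥0∞}
    (hr : 0 < r) (hs : Measure.mkMetric m s < a) :
    ∃ t : ℕ → Set X, s ⊆ ⋃ j, t j ∧ (∀ j, ediam (t j) ≤ r) ∧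
      ∑' j, ⨆ _ : (t j).Nonempty, m (ediam (t j)) < a := by
  rw [Measure.mkMetric_apply] at hs
  simpa only [iInf_lt_iff, exists_prop] using
    (le_iSup₂ (f := fun r (_ : 0 < r) => ⨅ (t : ℕ → Set X) (_ : s ⊆ iUnion t)
      (_ : ∀ n, ediam (t n) ≤ r), ∑' n, ⨆ _ : (t n).Nonempty, m (ediam (t n))) r hr).trans_lt hs

section ImageCover

variable {X Y : Type*} [EMetricSpace X] [EMetricSpace Y]

-- Taking closures makes this a Borel majorant of the cover sums of the fibers `A ∩ φ ⁻¹' {y}`.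
noncomputable def imageCoverSum (φ : X → Y) (A : Set X) (g : ℝ → ℝ) (t : ℕ → Set X) (y : Y) :
    ℝ≥0∞ :=
  ∑' j, (closure (φ '' (t j ∩ A))).indicator (fun _ => ENNReal.ofReal (g (ediam (t j)).toReal)) y

variable [MeasurableSpace Y] [OpensMeasurableSpace Y] (φ : X → Y) (A : Set X) (g : ℝ → ℝ)
  (t : ℕ → Set X)

theorem measurable_imageCoverSum : Measurable (imageCoverSum φ A g t) :=
  Measurable.tsum fun _ => measurable_const.indicator isClosed_closure.measurableSet

theorem lintegral_imageCoverSum (μ : Measure Y) :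
    ∫⁻ y, imageCoverSum φ A g t y ∂μ =
      ∑' j, ENNReal.ofReal (g (ediam (t j)).toReal) * μ (closure (φ '' (t j ∩ A))) := by
  unfold imageCoverSum
  rw [lintegral_tsum fun _ =>
    (measurable_const.indicator isClosed_closure.measurableSet).aemeasurable]
  exact tsum_congr fun _ => lintegral_indicator_const isClosed_closure.measurableSet _

end ImageCover

theorem ofReal_ediam_inter_fiber_le_indicator {X Y : Type*} [EMetricSpace X] [EMetricSpace Y]
    {g : ℝ → ℝ} (hg_mono : MonotoneOn g (Ici 0)) (hg0 : g 0 = 0) {φ : X → Y} {A s : Set X}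
    (hs : ediam s ≠ ⊤) (y : Y) :
    ENNReal.ofReal (g (ediam (s ∩ (A ∩ φ ⁻¹' {y}))).toReal) ≤
      (closure (φ '' (s ∩ A))).indicator (fun _ => ENNReal.ofReal (g (ediam s).toReal)) y := by
  rcases (s ∩ (A ∩ φ ⁻¹' {y})).eq_empty_or_nonempty with hempty | ⟨x, hxs, hxA, rfl⟩
  · simp [hempty, hg0]
  rw [indicator_of_mem (subset_closure (mem_image_of_mem φ (show x ∈ s ∩ A from ⟨hxs, hxA⟩)))]
  exact ENNReal.ofReal_le_ofReal <| hg_mono ENNReal.toReal_nonneg ENNReal.toReal_nonneg <|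
    ENNReal.toReal_mono hs (ediam_mono inter_subset_left)

theorem hMeasure_inter_preimage_le_liminf_imageCoverSum {X Y : Type*} [EMetricSpace X]
    [MeasurableSpace X] [BorelSpace X] [EMetricSpace Y] {g : ℝ → ℝ}
    (hg_mono : MonotoneOn g (Ici 0)) (hg0 : g 0 = 0) (φ : X → Y) {A : Set X}
    {t : ℕ → ℕ → Set X} {r : ℕ → ℝ≥0∞} (hr : Tendsto r atTop (𝓝 0))
    (hcov : ∀ n, A ⊆ ⋃ j, t n j) (hdiam : ∀ n j, ediam (t n j) ≤ r n) (y : Y) :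
    hMeasure g (A ∩ φ ⁻¹' {y}) ≤ liminf (fun n => imageCoverSum φ A g (t n) y) atTop := by
  calc hMeasure g (A ∩ φ ⁻¹' {y})
      ≤ liminf (fun n => ∑' j, ENNReal.ofReal (g (ediam (t n j ∩ (A ∩ φ ⁻¹' {y}))).toReal))
          atTop :=
        Measure.mkMetric_le_liminf_tsum _ r hr (fun n j => t n j ∩ (A ∩ φ ⁻¹' {y}))
          (.of_forall fun n j => (ediam_mono inter_subset_left).trans (hdiam n j))
          (.of_forall fun n x hx => by
            obtain ⟨j, hj⟩ := mem_iUnion.mp (hcov n hx.1)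
            exact mem_iUnion.mpr ⟨j, hj, hx⟩) _
    _ ≤ liminf (fun n => imageCoverSum φ A g (t n) y) atTop := by
      refine liminf_le_liminf ?_
      filter_upwards [hr.eventually (gt_mem_nhds ENNReal.zero_lt_top)] with n hn
      exact ENNReal.tsum_le_tsum fun j =>
        ofReal_ediam_inter_fiber_le_indicator hg_mono hg0 ((hdiam n j).trans_lt hn).ne y

section AddHaar

variable {X E : Type*} [EMetricSpace X] [NormedAddCommGroup E] [NormedSpace ℝ E]
  [MeasurableSpace E] [BorelSpace E] [FiniteDimensional ℝ E] (μ : Measure E)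
  [μ.IsAddHaarMeasure] {φ : X → E} {A : Set X} {K : ℝ≥0}

theorem addHaar_closure_image_inter_le (hφ : LipschitzOnWith K φ A) {s : Set X}
    (hs : ediam s ≠ ⊤) :
    μ (closure (φ '' (s ∩ A))) ≤
      ENNReal.ofReal ((K * (ediam s).toReal) ^ finrank ℝ E) * μ (closedBall 0 1) := by
  rcases (s ∩ A).eq_empty_or_nonempty with hempty | ⟨x₀, hx₀s, hx₀A⟩
  · simp [hempty]
  have hsub : closure (φ '' (s ∩ A)) ⊆ closedBall (φ x₀) (K * (ediam s).toReal) := by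
    refine closure_minimal ?_ isClosed_closedBall
    rintro _ ⟨x, ⟨hxs, hxA⟩, rfl⟩
    rw [← closedEBall_ofReal (by positivity), mem_closedEBall, ENNReal.ofReal_mul K.coe_nonneg,
      ENNReal.ofReal_toReal hs, ENNReal.ofReal_coe_nnreal]
    exact (hφ hxA hx₀A).trans (mul_le_mul_right (edist_le_ediam_of_mem hxs hx₀s) _)
  exact (measure_mono hsub).trans_eq (Measure.addHaar_closedBall' μ _ (by positivity))

variable {f g : ℝ → ℝ}

-- A set of infinite diameter has weight `g (⊤.toReal) = g 0 = 0`, so `ediam s` may be infinite.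
theorem ofReal_mul_addHaar_closure_image_inter_le (hg_nonneg : ∀ r, 0 ≤ r → 0 ≤ g r)
    (hg0 : g 0 = 0) (hgdef : ∀ r > (0:ℝ), g r = f r / r ^ finrank ℝ E)
    (hφ : LipschitzOnWith K φ A) (s : Set X) :
    ENNReal.ofReal (g (ediam s).toReal) * μ (closure (φ '' (s ∩ A))) ≤
      μ (closedBall 0 1) * K ^ finrank ℝ E *
        ⨆ _ : s.Nonempty, ENNReal.ofReal (f (ediam s).toReal) := by
  set d := (ediam s).toReal with hd_def
  rcases (show 0 ≤ d from ENNReal.toReal_nonneg).eq_or_lt with hd | hd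
  · rw [← hd, hg0, ENNReal.ofReal_zero, zero_mul]
    exact zero_le
  have hne : s.Nonempty := nonempty_iff_ne_empty.mpr fun h => by simp [hd_def, h] at hd
  have hs : ediam s ≠ ⊤ := fun h => by simp [hd_def, h] at hd
  have hgd : g d * (K * d) ^ finrank ℝ E = K ^ finrank ℝ E * f d := by
    have : d ^ finrank ℝ E ≠ 0 := by positivity
    rw [hgdef d hd, mul_pow]
    field_simp
  calc ENNReal.ofReal (g d) * μ (closure (φ '' (s ∩ A)))
      ≤ ENNReal.ofReal (g d) * (ENNReal.ofReal ((K * d) ^ finrank ℝ E) * μ (closedBall 0 1)) :=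
        mul_le_mul_right (addHaar_closure_image_inter_le μ hφ hs) _
    _ = μ (closedBall 0 1) * K ^ finrank ℝ E * ENNReal.ofReal (f d) := by
      rw [← mul_assoc, ← ENNReal.ofReal_mul (hg_nonneg d hd.le), hgd,
        ENNReal.ofReal_mul (by positivity), ← NNReal.coe_pow, ENNReal.ofReal_coe_nnreal,
        ENNReal.coe_pow]
      ring
    _ = _ := by rw [iSup_pos hne]

theorem lintegral_imageCoverSum_le (hg_nonneg : ∀ r, 0 ≤ r → 0 ≤ g r)
    (hg0 : g 0 = 0) (hgdef : ∀ r > (0:ℝ), g r = f r / r ^ finrank ℝ E)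
    (hφ : LipschitzOnWith K φ A) (t : ℕ → Set X) :
    ∫⁻ y, imageCoverSum φ A g t y ∂μ ≤
      μ (closedBall 0 1) * K ^ finrank ℝ E *
        ∑' j, ⨆ _ : (t j).Nonempty, ENNReal.ofReal (f (ediam (t j)).toReal) := by
  rw [lintegral_imageCoverSum, ← ENNReal.tsum_mul_left]
  exact ENNReal.tsum_le_tsum fun j =>
    ofReal_mul_addHaar_closure_image_inter_le μ hg_nonneg hg0 hgdef hφ (t j)

end AddHaar

theorem upperLintegral_hMeasure_inter_preimage_le {X E : Type*} [EMetricSpace X]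
    [MeasurableSpace X] [BorelSpace X] [NormedAddCommGroup E] [NormedSpace ℝ E]
    [MeasurableSpace E] [BorelSpace E] [FiniteDimensional ℝ E] (μ : Measure E)
    [μ.IsAddHaarMeasure] {f g : ℝ → ℝ} (hg : IsDimFun g)
    (hgdef : ∀ r > (0:ℝ), g r = f r / r ^ finrank ℝ E) {A : Set X} (hA : hMeasure f A ≠ ⊤)
    {φ : X → E} {K : ℝ≥0} (hφ : LipschitzOnWith K φ A) :
    upperLintegral μ (fun y => hMeasure g (A ∩ φ ⁻¹' {y})) ≤
      μ (closedBall 0 1) * K ^ finrank ℝ E * hMeasure f A := by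
  set c := μ (closedBall 0 1) * K ^ finrank ℝ E
  have hc : c ≠ ⊤ := ENNReal.mul_ne_top measure_closedBall_lt_top.ne (by simp)
  have hcover (n : ℕ) : ∃ t : ℕ → Set X, A ⊆ ⋃ j, t j ∧ (∀ j, ediam (t j) ≤ (n : ℝ≥0∞)⁻¹) ∧
      ∑' j, ⨆ _ : (t j).Nonempty, ENNReal.ofReal (f (ediam (t j)).toReal) <
        hMeasure f A + (n : ℝ≥0∞)⁻¹ :=
    Measure.exists_cover_tsum_lt_of_mkMetric_lt (by simp) (ENNReal.lt_add_right hA (by simp))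
  choose t hcov hdiam hsum using hcover
  have hlim : Tendsto (fun n : ℕ => c * (hMeasure f A + (n : ℝ≥0∞)⁻¹)) atTop
      (𝓝 (c * hMeasure f A)) := by
    simpa using ENNReal.Tendsto.const_mul
      (tendsto_const_nhds.add ENNReal.tendsto_inv_nat_nhds_zero) (Or.inr hc)
  calc upperLintegral μ (fun y => hMeasure g (A ∩ φ ⁻¹' {y}))
      ≤ liminf (fun n => ∫⁻ y, imageCoverSum φ A g (t n) y ∂μ) atTop :=
        upperLintegral_le_liminf_lintegral (fun n => measurable_imageCoverSum φ A g (t n))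
          (hMeasure_inter_preimage_le_liminf_imageCoverSum hg.2.1 hg.apply_zero φ
            ENNReal.tendsto_inv_nat_nhds_zero hcov hdiam)
    _ ≤ liminf (fun n : ℕ => c * (hMeasure f A + (n : ℝ≥0∞)⁻¹)) atTop := by
      refine liminf_le_liminf (.of_forall fun n => ?_)
      exact (lintegral_imageCoverSum_le μ hg.2.2.1 hg.apply_zero hgdef hφ (t n)).trans
        (mul_le_mul_right (hsum n).le c)
    _ = c * hMeasure f A := hlim.liminf_eq

theorem stmt1_general {k l : ℕ} (f g : ℝ → ℝ)
    (hg : IsDimFun g)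
    (hgdef : ∀ r > (0:ℝ), g r = f r / r ^ l)
    (A : Set (EuclideanSpace ℝ (Fin k)))
    (hAfin : hMeasure f A ≠ ⊤)
    (φ : EuclideanSpace ℝ (Fin k) → EuclideanSpace ℝ (Fin l)) (K : ℝ≥0)
    (hφ : LipschitzOnWith K φ A) :
    upperLintegral volume (fun y => hMeasure g (A ∩ φ ⁻¹' {y})) ≤
      volume (Metric.closedBall (0 : EuclideanSpace ℝ (Fin l)) 1) * 2 ^ l *
        (K : ℝ≥0∞) ^ l * hMeasure f A := by
  -- `hMeasure` is normalised by diameters rather than radii, so the factor `2 ^ l` is not needed.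
  have hgdef' : ∀ r > (0:ℝ), g r = f r / r ^ finrank ℝ (EuclideanSpace ℝ (Fin l)) := by
    simpa only [finrank_euclideanSpace_fin] using hgdef
  calc _ ≤ volume (closedBall (0 : EuclideanSpace ℝ (Fin l)) 1) * K ^ l * hMeasure f A := by
        simpa only [finrank_euclideanSpace_fin] using
          upperLintegral_hMeasure_inter_preimage_le volume hg hgdef' hAfin hφ
    _ ≤ _ := by
      gcongr
      exact le_mul_of_one_le_right zero_le (one_le_pow₀ one_le_two)

theorem stmt1 {k l : ℕ} (hl : 0 < l) (hlk : l ≤ k) (f g : ℝ → ℝ)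
    (hf : IsDimFun f) (hg : IsDimFun g)
    (hgdef : ∀ r > (0:ℝ), g r = f r / r ^ l)
    (A : Set (EuclideanSpace ℝ (Fin k))) (hA : MeasurableSet A)
    (hAfin : hMeasure f A ≠ ⊤)
    (φ : EuclideanSpace ℝ (Fin k) → EuclideanSpace ℝ (Fin l)) (K : ℝ≥0)
    (hφ : LipschitzOnWith K φ A) :
    upperLintegral volume (fun y => hMeasure g (A ∩ φ ⁻¹' {y})) ≤
      volume (Metric.closedBall (0 : EuclideanSpace ℝ (Fin l)) 1) * 2 ^ l *
        (K : ℝ≥0∞) ^ l * hMeasure f A :=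
  stmt1_general f g hg hgdef A hAfin φ K hφ
end

section
/- Let l ≤ k be positive integers and let f and g(r) := r^{-l} f(r) be dimension functions. Let A ⊆ ℝ^k be a Borel set and V a (k−l)-dimensional linear subspace of ℝ^k. If there exists a subset S of V^⊥ of positive H^l-measure such that H^g(A ∩ (V + b)) = ∞ for all b ∈ S, then H^f(A) = ∞. -/
open MeasureTheory Set Filter
open scoped ENNReal NNReal

/-!
Project `ℝ^k` onto coordinates `φ` of `Vᗮ ≅ ℝ^l`; the fibres of `φ` are the slices `V + b`. Let `tₙ`
be a cover of `A` by sets of diameter `dₙ ≤ r`. The pieces meeting the fibre over `y` cover that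
fibre, so the size-`r` approximation of its `H^g`-measure is at most `∑ₙ g(dₙ) 1_{φ(tₙ)}(y)`.
Integrating in `y`, and using `vol φ(tₙ) ≤ dₙ^l`, bounds the (lower) integral of these
approximations by `∑ₙ g(dₙ) dₙ^l = ∑ₙ f(dₙ)`. Since the fibres over the positive-measure set `φ(S)`
have infinite `H^g`-measure, letting `r → 0` forces `H^f(A) = ∞`.
-/

open Metric

noncomputable def hMeasurePre {X : Type*} [EMetricSpace X] (g : ℝ → ℝ) (r : ℝ≥0∞)
    (s : Set X) : ℝ≥0∞ :=
  ⨅ (t : ℕ → Set X) (_ : s ⊆ ⋃ n, t n) (_ : ∀ n, ediam (t n) ≤ r),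
    ∑' n, ⨆ _ : (t n).Nonempty, ENNReal.ofReal (g (ediam (t n)).toReal)

section hMeasurePre

variable {X : Type*} [EMetricSpace X] (g : ℝ → ℝ)

theorem hMeasure_eq_iSup_hMeasurePre [MeasurableSpace X] [BorelSpace X] (s : Set X) :
    hMeasure g s = ⨆ (r : ℝ≥0∞) (_ : 0 < r), hMeasurePre g r s := by
  rw [hMeasure, Measure.mkMetric_apply]
  rfl

theorem hMeasurePre_anti {s : Set X} {r r' : ℝ≥0∞} (h : r' ≤ r) :
    hMeasurePre g r s ≤ hMeasurePre g r' s :=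
  le_iInf₂ fun t ht => le_iInf fun htr =>
    iInf₂_le_of_le t ht <| iInf_le_of_le (fun n => (htr n).trans h) le_rfl

theorem hMeasurePre_le_tsum {s : Set X} {r : ℝ≥0∞} (t : ℕ → Set X) (ht : s ⊆ ⋃ n, t n)
    (htr : ∀ n, ediam (t n) ≤ r) :
    hMeasurePre g r s ≤ ∑' n, ⨆ _ : (t n).Nonempty, ENNReal.ofReal (g (ediam (t n)).toReal) :=
  iInf₂_le_of_le t ht <| iInf_le_of_le htr le_rfl

theorem exists_lt_hMeasurePre_of_lt_hMeasure [MeasurableSpace X] [BorelSpace X] {s : Set X}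
    {M : ℝ≥0∞} (h : M < hMeasure g s) : ∃ n : ℕ, M < hMeasurePre g ((n : ℝ≥0∞) + 1)⁻¹ s := by
  simp only [hMeasure_eq_iSup_hMeasurePre, lt_iSup_iff] at h
  obtain ⟨r, hr, hM⟩ := h
  obtain ⟨n, hn⟩ := ENNReal.exists_inv_nat_lt hr.ne'
  refine ⟨n, hM.trans_le (hMeasurePre_anti g (le_trans ?_ hn.le))⟩
  exact ENNReal.inv_le_inv.mpr le_self_add

end hMeasurePre

theorem mul_measure_le_tsum_of_le_tsum_indicator {α : Type*} [MeasurableSpace α]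
    (μ : Measure α) (c : ℕ → ℝ≥0∞) (W : ℕ → Set α) {T : Set α} {M : ℝ≥0∞}
    (h : ∀ y ∈ T, M ≤ ∑' n, (W n).indicator (fun _ => c n) y) :
    M * μ T ≤ ∑' n, c n * μ (W n) := by
  -- the `W n` need not be measurable: pass to measurable hulls, which have the same measure
  set F := fun y => ∑' n, (toMeasurable μ (W n)).indicator (fun _ => c n) y
  have hF : Measurable F :=
    .tsum fun n => measurable_const.indicator (measurableSet_toMeasurable μ _)
  have hTF : T ⊆ {y | M ≤ F y} := fun y hy =>
    (h y hy).trans <| ENNReal.tsum_le_tsum fun n =>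
      indicator_le_indicator_of_subset (subset_toMeasurable μ _) (fun _ => zero_le) y
  calc M * μ T ≤ M * μ {y | M ≤ F y} := by gcongr
    _ ≤ ∫⁻ y, F y ∂μ := mul_meas_ge_le_lintegral hF M
    _ = ∑' n, c n * μ (W n) := by
        rw [lintegral_tsum fun n => (measurable_const.indicator
          (measurableSet_toMeasurable μ _)).aemeasurable]
        simp_rw [lintegral_indicator_const (measurableSet_toMeasurable μ _),
          measure_toMeasurable]

section Fibers

variable {X : Type*} [EMetricSpace X]

theorem hMeasurePre_inter_fiber_le_tsum_indicator {Y : Type*} (g : ℝ → ℝ) (φ : X → Y)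
    {A : Set X} {r : ℝ≥0∞} {t : ℕ → Set X} (ht : A ⊆ ⋃ n, t n) (htr : ∀ n, ediam (t n) ≤ r)
    (y : Y) :
    hMeasurePre g r (A ∩ φ ⁻¹' {y}) ≤
      ∑' n, (φ '' t n).indicator (fun _ => ENNReal.ofReal (g (ediam (t n)).toReal)) y := by
  classical
  let t' : ℕ → Set X := fun n => if y ∈ φ '' t n then t n else ∅
  have hcov : A ∩ φ ⁻¹' {y} ⊆ ⋃ n, t' n := by
    rintro x ⟨hxA, hxy⟩
    obtain ⟨n, hn⟩ := mem_iUnion.mp (ht hxA)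
    have hy : y ∈ φ '' t n := ⟨x, hn, hxy⟩
    exact mem_iUnion.mpr ⟨n, by simp only [t', if_pos hy, hn]⟩
  refine (hMeasurePre_le_tsum g t' hcov fun n => ?_).trans (ENNReal.tsum_le_tsum fun n => ?_)
  · dsimp only [t']
    split_ifs
    exacts [htr n, ediam_empty.trans_le zero_le]
  · dsimp only [t']
    split_ifs with hy
    · rw [indicator_of_mem hy]
      exact iSup_const_le
    · simp

variable {l : ℕ} {f g : ℝ → ℝ} {φ : X → (Fin l → ℝ)}

theorem ofReal_mul_volume_image_le
    (hfg : ∀ r, 0 ≤ r → g r * r ^ l ≤ f r) (hφ : LipschitzWith 1 φ)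
    {t : Set X} (ht : ediam t ≠ ⊤) :
    ENNReal.ofReal (g (ediam t).toReal) * volume (φ '' t) ≤
      ⨆ _ : t.Nonempty, ENNReal.ofReal (f (ediam t).toReal) := by
  rcases t.eq_empty_or_nonempty with rfl | hne
  · simp
  rw [iSup_pos hne]
  have hvol : volume (φ '' t) ≤ ENNReal.ofReal (ediam t).toReal ^ l := by
    calc volume (φ '' t) ≤ ediam (φ '' t) ^ l := by
          simpa using Real.volume_pi_le_diam_pow (φ '' t)
      _ ≤ ediam t ^ l := by gcongr; simpa using hφ.ediam_image_le t
      _ = _ := by rw [ENNReal.ofReal_toReal ht]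
  calc ENNReal.ofReal (g (ediam t).toReal) * volume (φ '' t)
      ≤ ENNReal.ofReal (g (ediam t).toReal) * ENNReal.ofReal (ediam t).toReal ^ l := by gcongr
    _ = ENNReal.ofReal (g (ediam t).toReal * (ediam t).toReal ^ l) := by
        rw [ENNReal.ofReal_mul' (by positivity), ENNReal.ofReal_pow ENNReal.toReal_nonneg]
    _ ≤ ENNReal.ofReal (f (ediam t).toReal) :=
        ENNReal.ofReal_le_ofReal (hfg _ ENNReal.toReal_nonneg)

theorem mul_volume_le_hMeasurePre
    (hfg : ∀ r, 0 ≤ r → g r * r ^ l ≤ f r) (hφ : LipschitzWith 1 φ)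
    {A : Set X} {T : Set (Fin l → ℝ)} {M r : ℝ≥0∞} (hr : r ≠ ⊤)
    (hT : ∀ y ∈ T, M ≤ hMeasurePre g r (A ∩ φ ⁻¹' {y})) :
    M * volume T ≤ hMeasurePre f r A := by
  refine le_iInf₂ fun t ht => le_iInf fun htr => ?_
  calc M * volume T ≤ ∑' n, ENNReal.ofReal (g (ediam (t n)).toReal) * volume (φ '' t n) :=
        mul_measure_le_tsum_of_le_tsum_indicator _ _ _ fun y hy =>
          (hT y hy).trans (hMeasurePre_inter_fiber_le_tsum_indicator g φ ht htr y)
    _ ≤ _ := ENNReal.tsum_le_tsum fun n =>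
        ofReal_mul_volume_image_le hfg hφ (ne_top_of_le_ne_top hr (htr n))

variable [MeasurableSpace X] [BorelSpace X]

theorem mul_volume_le_hMeasure
    (hfg : ∀ r, 0 ≤ r → g r * r ^ l ≤ f r) (hφ : LipschitzWith 1 φ)
    {A : Set X} {T : Set (Fin l → ℝ)} {M : ℝ≥0∞}
    (hT : ∀ y ∈ T, M < hMeasure g (A ∩ φ ⁻¹' {y})) : M * volume T ≤ hMeasure f A := by
  let T' : ℕ → Set (Fin l → ℝ) := fun n =>
    {y ∈ T | M < hMeasurePre g ((n : ℝ≥0∞) + 1)⁻¹ (A ∩ φ ⁻¹' {y})}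
  have hmono : Monotone T' := fun m n hmn y hy =>
    ⟨hy.1, hy.2.trans_le (hMeasurePre_anti g (ENNReal.inv_le_inv.mpr (by gcongr)))⟩
  have hT' : T = ⋃ n, T' n := by
    refine Subset.antisymm (fun y hy => mem_iUnion.mpr ?_) (iUnion_subset fun n => sep_subset _ _)
    exact (exists_lt_hMeasurePre_of_lt_hMeasure g (hT y hy)).imp fun n hn => ⟨hy, hn⟩
  rw [hT', hmono.measure_iUnion, ENNReal.mul_iSup]
  refine iSup_le fun n => ?_
  calc M * volume (T' n) ≤ hMeasurePre f ((n : ℝ≥0∞) + 1)⁻¹ A :=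
        mul_volume_le_hMeasurePre hfg hφ (by simp) fun y hy => hy.2.le
    _ ≤ hMeasure f A := by
        rw [hMeasure_eq_iSup_hMeasurePre]
        exact le_iSup₂_of_le _ (by simp) le_rfl

theorem hMeasure_eq_top_of_fibers
    (hfg : ∀ r, 0 ≤ r → g r * r ^ l ≤ f r) (hφ : LipschitzWith 1 φ)
    {A : Set X} {T : Set (Fin l → ℝ)} (hT : 0 < volume T)
    (hA : ∀ y ∈ T, hMeasure g (A ∩ φ ⁻¹' {y}) = ⊤) : hMeasure f A = ⊤ := by
  by_contra hne
  obtain ⟨n, hn⟩ := ENNReal.exists_nat_mul_gt hT.ne' hne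
  refine (mul_volume_le_hMeasure hfg hφ fun y hy => ?_).not_gt hn
  rw [hA y hy]
  exact ENNReal.natCast_lt_top n

end Fibers

section OrthogonalProjectionCoords

variable {E : Type*} [NormedAddCommGroup E] [InnerProductSpace ℝ E] (K : Submodule ℝ E)
  [FiniteDimensional ℝ K] {l : ℕ} (hK : Module.finrank ℝ K = l)

noncomputable def orthonormalCoords : K ≃ₗᵢ[ℝ] EuclideanSpace ℝ (Fin l) :=
  ((stdOrthonormalBasis ℝ K).reindex (finCongr hK)).repr

/-- Valued in `Fin l → ℝ` with its sup metric, where `volume = μH[l]` and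
`volume s ≤ ediam s ^ l`. -/
noncomputable def orthogonalProjectionCoords (x : E) : Fin l → ℝ :=
  WithLp.ofLp (orthonormalCoords K hK (K.orthogonalProjectionOnto x))

theorem lipschitzWith_orthogonalProjectionCoords :
    LipschitzWith 1 (orthogonalProjectionCoords K hK) := by
  have hP : LipschitzWith 1 K.orthogonalProjectionOnto :=
    K.orthogonalProjectionOnto.lipschitz.weaken K.orthogonalProjectionOnto_norm_le
  have h := (PiLp.lipschitzWith_ofLp 2 _).comp
    ((orthonormalCoords K hK).isometry.lipschitz.comp hP)
  rw [mul_one, mul_one] at h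
  exact h

theorem orthogonalProjectionCoords_add_of_mem_orthogonal {v : E} (hv : v ∈ Kᗮ) (x : E) :
    orthogonalProjectionCoords K hK (v + x) = orthogonalProjectionCoords K hK x := by
  simp [orthogonalProjectionCoords, K.orthogonalProjectionOnto_apply_of_mem_orthogonal hv]

theorem volume_orthogonalProjectionCoords_image_pos [MeasurableSpace E] [BorelSpace E] {S : Set E}
    (hSK : S ⊆ K) (hS : 0 < μH[(l : ℝ)] S) : 0 < volume (orthogonalProjectionCoords K hK '' S) := by
  let ψ : (Fin l → ℝ) → E := fun y => (orthonormalCoords K hK).symm (WithLp.toLp 2 y)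
  have hψ : LipschitzWith ((Fintype.card (Fin l) : ℝ≥0) ^ (1 / (2 : ℝ≥0∞)).toReal) ψ := by
    have h := K.subtypeₗᵢ.isometry.lipschitz.comp
      ((orthonormalCoords K hK).symm.isometry.lipschitz.comp (PiLp.lipschitzWith_toLp 2 _))
    rw [one_mul, one_mul] at h
    exact h
  have hSψ : S ⊆ ψ '' (orthogonalProjectionCoords K hK '' S) := fun x hx =>
    ⟨_, mem_image_of_mem _ hx, by simp [ψ, orthogonalProjectionCoords,
      K.orthogonalProjectionOnto_mem_subspace_eq_self ⟨x, hSK hx⟩]⟩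
  have hvol : (volume : Measure (Fin l → ℝ)) = μH[(l : ℝ)] := by
    rw [← hausdorffMeasure_pi_real, Fintype.card_fin]
  rw [hvol]
  refine pos_of_ne_zero fun h0 => hS.ne' (le_antisymm ?_ zero_le)
  calc μH[(l : ℝ)] S ≤ _ := measure_mono hSψ
    _ ≤ _ := hψ.hausdorffMeasure_image_le (Nat.cast_nonneg l) _
    _ = 0 := by rw [Fintype.card_fin, h0, mul_zero]

end OrthogonalProjectionCoords

theorem stmt3_general {k l : ℕ} (hl : 0 < l) (hlk : l ≤ k) (f g : ℝ → ℝ)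
    (hf : IsDimFun f)
    (hgdef : ∀ r > (0:ℝ), g r = f r / r ^ l)
    (A : Set (EuclideanSpace ℝ (Fin k)))
    (V : Submodule ℝ (EuclideanSpace ℝ (Fin k)))
    (hV : Module.finrank ℝ V = k - l)
    (S : Set (EuclideanSpace ℝ (Fin k))) (hS : S ⊆ (Vᗮ : Set (EuclideanSpace ℝ (Fin k))))
    (hSpos : 0 < μH[(l : ℝ)] S)
    (hinf : ∀ b ∈ S,
      hMeasure g (A ∩ ((fun v => v + b) '' (V : Set (EuclideanSpace ℝ (Fin k))))) = ⊤) :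
    hMeasure f A = ⊤ := by
  have hVperp : Module.finrank ℝ Vᗮ = l := by
    have := V.finrank_add_finrank_orthogonal
    rw [hV, finrank_euclideanSpace_fin] at this
    omega
  have hfg : ∀ r, 0 ≤ r → g r * r ^ l ≤ f r := by
    intro r hr
    rcases hr.eq_or_lt with rfl | hr
    · simpa [zero_pow hl.ne'] using hf.2.2.1 0 le_rfl
    · rw [hgdef r hr, div_mul_cancel₀ _ (by positivity)]
  refine hMeasure_eq_top_of_fibers hfg (lipschitzWith_orthogonalProjectionCoords _ hVperp)
    (volume_orthogonalProjectionCoords_image_pos _ hVperp hS hSpos) ?_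
  rintro _ ⟨b, hb, rfl⟩
  refine eq_top_mono (measure_mono ?_) (hinf b hb)
  rintro _ ⟨hxA, v, hv, rfl⟩
  exact ⟨hxA, orthogonalProjectionCoords_add_of_mem_orthogonal _ hVperp
    (V.le_orthogonal_orthogonal hv) b⟩

theorem stmt3 {k l : ℕ} (hl : 0 < l) (hlk : l ≤ k) (f g : ℝ → ℝ)
    (hf : IsDimFun f) (hg : IsDimFun g)
    (hgdef : ∀ r > (0:ℝ), g r = f r / r ^ l)
    (A : Set (EuclideanSpace ℝ (Fin k))) (hA : MeasurableSet A)
    (V : Submodule ℝ (EuclideanSpace ℝ (Fin k)))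
    (hV : Module.finrank ℝ V = k - l)
    (S : Set (EuclideanSpace ℝ (Fin k))) (hS : S ⊆ (Vᗮ : Set (EuclideanSpace ℝ (Fin k))))
    (hSpos : 0 < μH[(l : ℝ)] S)
    (hinf : ∀ b ∈ S,
      hMeasure g (A ∩ ((fun v => v + b) '' (V : Set (EuclideanSpace ℝ (Fin k))))) = ⊤) :
    hMeasure f A = ⊤ :=
  stmt3_general hl hlk f g hf hgdef A V hV S hS hSpos hinf
end

section
/- Fix b ∈ ℝ^m and let Ψ : ℤ^n → ℝ⁺ satisfy Ψ(a) → 0 as |a| → ∞. Let f be a dimension function such that g(r) := r^{-(n-1)m} f(r) is a dimension function. If Σ_{a ∈ ℤ^n \ {0}} g(Ψ(a)/|a|) · |a|^m < ∞, then H^f(W_{n,m}^b(Ψ)) = 0. -/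
/-!
Cover the `a`-th approximation set `{X ∈ [0,1)^{mn} : ‖a·x_j − b_j‖ < Ψ(a) ∀ j}` by the grid
cubes of side `r / (mn)` meeting it, where `r = Ψ(a)/|a|`; their diameter is at most `r`. In one
row, once all coordinates but one with `|a_i| = |a|` are fixed, that coordinate has `O(|a|)`
admissible grid values, so a row meets `O(r^{-(n-1)} |a|)` cubes and the whole set
`O(r^{-(n-1)m} |a|^m)`. Their total `f`-cost is `O(f(r) r^{-(n-1)m} |a|^m) = O(g(r) |a|^m)`,
summable by hypothesis, and the Hausdorff–Cantelli lemma gives `H^f(W) = 0`.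
-/
open MeasureTheory Set Filter
open scoped ENNReal

/-- `|a| := max |a_i|` for an integer vector. -/
def anorm {n : ℕ} (a : Fin n → ℤ) : ℕ := Finset.univ.sup fun i => (a i).natAbs

/-- Distance from a real number to the nearest integer. -/
noncomputable def intDist (x : ℝ) : ℝ := |x - round x|

/-- The set `W_{n,m}^b(Ψ)` of `X ∈ [0,1)^{n×m}` such that
`‖a · x_j - b_j‖ < Ψ(a)` for all `j` for infinitely many `a ∈ ℤ^n`. -/
def W (n m : ℕ) (b : Fin m → ℝ) (Ψ : (Fin n → ℤ) → ℝ) :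
    Set (EuclideanSpace ℝ (Fin m × Fin n)) :=
  {X | (∀ ji, X ji ∈ Set.Ico (0:ℝ) 1) ∧
    {a : Fin n → ℤ |
      ∀ j : Fin m, intDist ((∑ i, (a i : ℝ) * X (j, i)) - b j) < Ψ a}.Infinite}

/-- The unit box `[0,1)^{n×m}`. -/
def box (n m : ℕ) : Set (EuclideanSpace ℝ (Fin m × Fin n)) :=
  {X | ∀ ji, X ji ∈ Set.Ico (0:ℝ) 1}

open scoped NNReal Topology Finset

lemma intDist_nonneg (x : ℝ) : 0 ≤ intDist x := abs_nonneg _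

lemma intDist_le_intDist_add_abs_sub (x y : ℝ) : intDist y ≤ intDist x + |y - x| :=
  calc intDist y ≤ |y - round x| := round_le y (round x)
    _ ≤ |y - x| + |x - round x| := abs_sub_le y x (round x)
    _ = intDist x + |y - x| := add_comm _ _

section anorm

variable {n : ℕ}

lemma natAbs_le_anorm (a : Fin n → ℤ) (i : Fin n) : (a i).natAbs ≤ anorm a :=
  Finset.le_sup (f := fun i => (a i).natAbs) (Finset.mem_univ i)

lemma abs_le_anorm (a : Fin n → ℤ) (i : Fin n) : |(a i : ℝ)| ≤ anorm a := by
  rw [← Int.cast_abs, ← Nat.cast_natAbs]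
  exact_mod_cast natAbs_le_anorm a i

lemma anorm_zero : anorm (0 : Fin n → ℤ) = 0 :=
  Nat.eq_zero_of_le_zero <| Finset.sup_le fun i _ => by simp

lemma one_le_anorm {a : Fin n → ℤ} (ha : a ≠ 0) : 1 ≤ anorm a := by
  obtain ⟨i, hi⟩ := Function.ne_iff.mp ha
  exact (Int.natAbs_pos.mpr hi).trans_le (natAbs_le_anorm a i)

lemma exists_abs_eq_anorm {a : Fin n → ℤ} (ha : a ≠ 0) : ∃ i, |(a i : ℝ)| = anorm a := by
  obtain ⟨i, -⟩ := Function.ne_iff.mp ha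
  obtain ⟨i₀, -, h⟩ := Finset.exists_mem_eq_sup Finset.univ ⟨i, Finset.mem_univ i⟩
    fun i => (a i).natAbs
  exact ⟨i₀, by rw [anorm, h, Nat.cast_natAbs, Int.cast_abs]⟩

lemma tendsto_anorm_cofinite : Tendsto (anorm : (Fin n → ℤ) → ℕ) cofinite atTop := by
  refine tendsto_atTop.2 fun N => eventually_cofinite.2 ?_
  refine (Set.Finite.pi' fun _ => Set.finite_Icc (-(N : ℤ)) N).subset fun a ha i => ?_
  have := natAbs_le_anorm a i
  have : anorm a < N := not_le.1 ha
  simp only [Set.mem_Icc]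
  omega

end anorm

section grid

variable {ι : Type*} [Fintype ι]

def cube (s : ℝ) (k : ι → ℤ) : Set (ι → ℝ) :=
  Set.univ.pi fun i => Ico (k i * s) ((k i + 1) * s)

open Classical in
noncomputable def gridIndices (s : ℝ) (A : Set (ι → ℝ)) : Finset (ι → ℤ) :=
  (Fintype.piFinset fun _ => Finset.Ico 0 (⌈s⁻¹⌉₊ : ℤ)).filter fun k => (cube s k ∩ A).Nonempty

lemma mem_gridIndices {s : ℝ} {A : Set (ι → ℝ)} {k : ι → ℤ} :
    k ∈ gridIndices s A ↔
      (∀ i, k i ∈ Finset.Ico 0 (⌈s⁻¹⌉₊ : ℤ)) ∧ (cube s k ∩ A).Nonempty := by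
  classical
  rw [gridIndices, Finset.mem_filter, Fintype.mem_piFinset]

lemma floor_div_mem_gridIndices {s : ℝ} (hs : 0 < s) {A : Set (ι → ℝ)} {x : ι → ℝ}
    (hx₁ : ∀ i, x i ∈ Ico (0 : ℝ) 1) (hxA : x ∈ A) :
    (fun i => ⌊x i / s⌋) ∈ gridIndices s A ∧ x ∈ cube s (fun i => ⌊x i / s⌋) := by
  have hcube : x ∈ cube s (fun i => ⌊x i / s⌋) := fun i _ =>
    ⟨(le_div_iff₀ hs).1 (Int.floor_le _), (div_lt_iff₀ hs).1 (Int.lt_floor_add_one _)⟩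
  rw [mem_gridIndices]
  refine ⟨⟨fun i => Finset.mem_Ico.2 ⟨?_, ?_⟩, x, hcube, hxA⟩, hcube⟩
  · exact Int.floor_nonneg.2 (div_nonneg (hx₁ i).1 hs.le)
  · rw [Int.floor_lt, Int.cast_natCast]
    calc x i / s < s⁻¹ := by rw [div_lt_iff₀ hs, inv_mul_cancel₀ hs.ne']; exact (hx₁ i).2
      _ ≤ ⌈s⁻¹⌉₊ := Nat.le_ceil _

lemma ediam_toLp_cube_le (s : ℝ) (k : ι → ℤ) :
    Metric.ediam (WithLp.toLp 2 '' cube s k : Set (EuclideanSpace ℝ ι)) ≤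
      ENNReal.ofReal (Fintype.card ι * s) := by
  have hcard : (Fintype.card ι : ℝ≥0) ^ (1 / (2 : ℝ≥0∞)).toReal ≤ Fintype.card ι := by
    rcases Nat.eq_zero_or_pos (Fintype.card ι) with h | h
    · simp [h]
    · have h1 : (1 : ℝ≥0) ≤ Fintype.card ι := by exact_mod_cast h
      simpa using NNReal.rpow_le_rpow_of_exponent_le h1
        (show (1 / (2 : ℝ≥0∞)).toReal ≤ 1 by norm_num)
  calc Metric.ediam (WithLp.toLp 2 '' cube s k : Set (EuclideanSpace ℝ ι))
      ≤ ((Fintype.card ι : ℝ≥0) ^ (1 / (2 : ℝ≥0∞)).toReal : ℝ≥0) * Metric.ediam (cube s k) :=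
        (PiLp.lipschitzWith_toLp 2 _).ediam_image_le _
    _ ≤ (Fintype.card ι : ℝ≥0) * ENNReal.ofReal s := by
        gcongr
        exact Metric.ediam_pi_le_of_le fun i => by rw [Real.ediam_Ico]; ring_nf; rfl
    _ = ENNReal.ofReal (Fintype.card ι * s) := by
        rw [ENNReal.ofReal_mul (Nat.cast_nonneg _), ENNReal.ofReal_natCast, ENNReal.coe_natCast]

lemma abs_sum_mul_sub_le_of_mem_cube {s : ℝ} {k : ι → ℤ} {x : ι → ℝ} (hx : x ∈ cube s k)
    {w : ι → ℝ} {B : ℝ} (hw : ∀ i, |w i| ≤ B) :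
    |∑ i, w i * x i - s * ∑ i, w i * k i| ≤ Fintype.card ι * (B * s) := by
  have hxi : ∀ i, |x i - k i * s| ≤ s := fun i => by
    obtain ⟨h₁, h₂⟩ := hx i (Set.mem_univ i)
    rw [abs_le]; constructor <;> linarith
  calc |∑ i, w i * x i - s * ∑ i, w i * k i| = |∑ i, w i * (x i - k i * s)| := by
        rw [Finset.mul_sum, ← Finset.sum_sub_distrib]
        congr 1; exact Finset.sum_congr rfl fun i _ => by ring
    _ ≤ ∑ i, |w i| * |x i - k i * s| := by
        simpa only [abs_mul] using Finset.abs_sum_le_sum_abs (fun i => w i * (x i - k i * s)) _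
    _ ≤ ∑ _i : ι, B * s := Finset.sum_le_sum fun i _ =>
        mul_le_mul (hw i) (hxi i) (abs_nonneg _) ((abs_nonneg _).trans (hw i))
    _ = Fintype.card ι * (B * s) := by rw [Finset.sum_const, nsmul_eq_mul, Finset.card_univ]

end grid

lemma card_le_of_forall_sub_le {S : Finset ℤ} {L : ℝ} (hL : 0 ≤ L)
    (h : ∀ t ∈ S, ∀ t' ∈ S, ((t - t' : ℤ) : ℝ) ≤ L) : (#S : ℝ) ≤ L + 1 := by
  rcases S.eq_empty_or_nonempty with rfl | hS
  · simpa using by linarith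
  have hsub : S ⊆ Finset.Icc (S.min' hS) (S.max' hS) := fun t ht =>
    Finset.mem_Icc.2 ⟨S.min'_le t ht, S.le_max' t ht⟩
  have hwidth := h _ (S.max'_mem hS) _ (S.min'_mem hS)
  have hle : S.min' hS ≤ S.max' hS := S.min'_le_max' hS
  calc (#S : ℝ) ≤ #(Finset.Icc (S.min' hS) (S.max' hS)) := by
        exact_mod_cast Finset.card_le_card hsub
    _ = ((S.max' hS - S.min' hS : ℤ) : ℝ) + 1 := by
        rw [Int.card_Icc, show S.max' hS + 1 - S.min' hS = (S.max' hS - S.min' hS) + 1 by ring,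
          ← Int.cast_natCast, Int.toNat_of_nonneg (by omega)]
        push_cast; ring
    _ ≤ L + 1 := by linarith

lemma card_filter_round_eq_le {α δ c : ℝ} (hα : α ≠ 0) (hδ : 0 ≤ δ) {T : Finset ℤ}
    (hT : ∀ t ∈ T, intDist (α * t + c) < δ) (q : ℤ) :
    (#(T.filter fun t : ℤ => round (α * t + c) = q) : ℝ) ≤ 2 * δ / |α| + 1 := by
  refine card_le_of_forall_sub_le (by positivity) fun t ht t' ht' => ?_
  rw [Finset.mem_filter] at ht ht'
  have h₁ : |α * t + c - q| < δ := ht.2 ▸ hT t ht.1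
  have h₂ : |α * t' + c - q| < δ := ht'.2 ▸ hT t' ht'.1
  rw [le_div_iff₀ (abs_pos.2 hα), Int.cast_sub]
  calc ((t : ℝ) - t') * |α| ≤ |α * t + c - q - (α * t' + c - q)| := by
        rw [show α * t + c - q - (α * t' + c - q) = α * (t - t') by ring, abs_mul, mul_comm]
        exact mul_le_mul_of_nonneg_left (le_abs_self _) (abs_nonneg _)
    _ ≤ |α * t + c - q| + |α * t' + c - q| := abs_sub _ _
    _ ≤ 2 * δ := by linarith

lemma card_image_round_le (α c : ℝ) {T : Finset ℤ} {M : ℕ}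
    (hT : ∀ t ∈ T, t ∈ Finset.Ico 0 (M : ℤ)) :
    (#(T.image fun t : ℤ => round (α * t + c)) : ℝ) ≤ |α| * M + 2 := by
  suffices h : ∀ t ∈ T, ∀ t' ∈ T,
      ((round (α * t + c) - round (α * t' + c) : ℤ) : ℝ) ≤ |α| * M + 1 by
    have := card_le_of_forall_sub_le (S := T.image fun t : ℤ => round (α * t + c))
      (L := |α| * M + 1) (by positivity)
      (by simpa only [Finset.mem_image, forall_exists_index, and_imp, forall_apply_eq_imp_iff₂])
    linarith
  intro t ht t' ht'
  have hdiff : |((t - t' : ℤ) : ℝ)| ≤ M := by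
    have := Finset.mem_Ico.1 (hT t ht)
    have := Finset.mem_Ico.1 (hT t' ht')
    rw [← Int.cast_abs, ← Int.cast_natCast, Int.cast_le, abs_le]
    omega
  have hmul : α * ((t - t' : ℤ) : ℝ) ≤ |α| * M := by
    calc α * ((t - t' : ℤ) : ℝ) ≤ |α| * |((t - t' : ℤ) : ℝ)| := by
          rw [← abs_mul]; exact le_abs_self _
      _ ≤ |α| * M := by gcongr
  have hsplit : ((round (α * t + c) - round (α * t' + c) : ℤ) : ℝ) =
      -(α * t + c - round (α * t + c)) + (α * t' + c - round (α * t' + c)) +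
        α * ((t - t' : ℤ) : ℝ) := by
    push_cast; ring
  rw [hsplit]
  linarith [abs_sub_round (α * t + c), abs_sub_round (α * t' + c),
    le_abs_self (α * t' + c - round (α * t' + c)), neg_le_abs (α * t + c - round (α * t + c))]

lemma card_filter_intDist_lt_le {α δ : ℝ} (hα : α ≠ 0) (hδ : 0 ≤ δ) (c : ℝ) (M : ℕ) :
    (#((Finset.Ico (0 : ℤ) M).filter fun t : ℤ => intDist (α * t + c) < δ) : ℝ) ≤
      (2 * δ / |α| + 1) * (|α| * M + 2) := by
  set T := (Finset.Ico (0 : ℤ) M).filter fun t : ℤ => intDist (α * t + c) < δ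
  set p : ℤ → ℤ := fun t => round (α * t + c)
  calc (#T : ℝ) = ∑ q ∈ T.image p, (#(T.filter fun t => p t = q) : ℝ) := by
        exact_mod_cast Finset.card_eq_sum_card_image p T
    _ ≤ ∑ _q ∈ T.image p, (2 * δ / |α| + 1) := Finset.sum_le_sum fun q _ =>
        card_filter_round_eq_le hα hδ (fun t ht => (Finset.mem_filter.1 ht).2) q
    _ = (2 * δ / |α| + 1) * #(T.image p) := by rw [Finset.sum_const, nsmul_eq_mul, mul_comm]
    _ ≤ (2 * δ / |α| + 1) * (|α| * M + 2) := by
        gcongr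
        exact card_image_round_le α c fun t ht => (Finset.mem_filter.1 ht).1

section fibers

variable {ι : Type*} [Fintype ι] [DecidableEq ι]

lemma card_le_pow_mul_of_card_fiber_le {S : Finset (ι → ℤ)} {M : ℕ}
    (hS : ∀ k ∈ S, ∀ i, k i ∈ Finset.Ico 0 (M : ℤ)) (i₀ : ι) {L : ℝ} (hL : 0 ≤ L)
    (hfib : ∀ q : {i // i ≠ i₀} → ℤ,
      (#(S.filter fun k => (fun i : {i // i ≠ i₀} => k i) = q) : ℝ) ≤ L) :
    (#S : ℝ) ≤ M ^ (Fintype.card ι - 1) * L := by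
  set ρ : (ι → ℤ) → {i // i ≠ i₀} → ℤ := fun k i => k i
  have himage : S.image ρ ⊆ Fintype.piFinset fun _ => Finset.Ico 0 (M : ℤ) := by
    simp only [Finset.subset_iff, Finset.mem_image, Fintype.mem_piFinset]
    rintro _ ⟨k, hk, rfl⟩ i
    exact hS k hk i
  have hcard : #(Fintype.piFinset fun _ : {i // i ≠ i₀} => Finset.Ico 0 (M : ℤ)) =
      M ^ (Fintype.card ι - 1) := by
    simp [Fintype.card_piFinset, Fintype.card_subtype_compl]
  calc (#S : ℝ) = ∑ q ∈ S.image ρ, (#(S.filter fun k => ρ k = q) : ℝ) := by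
        exact_mod_cast Finset.card_eq_sum_card_image ρ S
    _ ≤ ∑ _q ∈ S.image ρ, L := Finset.sum_le_sum fun q _ => hfib q
    _ = #(S.image ρ) * L := by rw [Finset.sum_const, nsmul_eq_mul]
    _ ≤ M ^ (Fintype.card ι - 1) * L := by
        gcongr
        exact_mod_cast hcard ▸ Finset.card_le_card himage

lemma card_fiber_le_card_filter_intDist {S : Finset (ι → ℤ)} {M : ℕ}
    (hS : ∀ k ∈ S, ∀ i, k i ∈ Finset.Ico 0 (M : ℤ)) {w : ι → ℝ} {s c δ : ℝ}
    (hSδ : ∀ k ∈ S, intDist (s * ∑ i, w i * k i - c) < δ) (i₀ : ι) (q : {i // i ≠ i₀} → ℤ) :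
    #(S.filter fun k => (fun i : {i // i ≠ i₀} => k i) = q) ≤
      #((Finset.Ico (0 : ℤ) M).filter fun t : ℤ =>
        intDist (w i₀ * s * t + (s * ∑ i : {i // i ≠ i₀}, w i * q i - c)) < δ) := by
  refine Finset.card_le_card_of_injOn (fun k => k i₀) (fun k hk => ?_) fun k hk k' hk' h => ?_
  · rw [Finset.mem_coe, Finset.mem_filter] at hk ⊢
    obtain ⟨hkS, rfl⟩ := hk
    refine ⟨hS k hkS i₀, ?_⟩
    have := hSδ k hkS
    rw [Fintype.sum_eq_add_sum_subtype_ne _ i₀] at this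
    convert this using 2
    ring
  · rw [Finset.mem_coe, Finset.mem_filter] at hk hk'
    funext i
    by_cases hi : i = i₀
    · subst hi; exact h
    · exact congrFun (hk.2.trans hk'.2.symm) ⟨i, hi⟩

end fibers

lemma intDist_sum_mul_lt_of_mem_gridIndices {ι : Type*} [Fintype ι] {w : ι → ℝ} {B s c ψ : ℝ}
    (hw : ∀ i, |w i| ≤ B) (hψ : Fintype.card ι * (B * s) ≤ ψ) {k : ι → ℤ}
    (hk : k ∈ gridIndices s {x | intDist (∑ i, w i * x i - c) < ψ}) :
    intDist (s * ∑ i, w i * k i - c) < 2 * ψ := by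
  obtain ⟨x, hx, hxA⟩ := (mem_gridIndices.1 hk).2
  have hshift := abs_sum_mul_sub_le_of_mem_cube hx hw
  calc intDist (s * ∑ i, w i * k i - c)
      ≤ intDist (∑ i, w i * x i - c) + |s * ∑ i, w i * k i - c - (∑ i, w i * x i - c)| :=
        intDist_le_intDist_add_abs_sub _ _
    _ < ψ + ψ := by
        rw [abs_sub_comm, show ∑ i, w i * x i - c - (s * ∑ i, w i * k i - c) =
          ∑ i, w i * x i - s * ∑ i, w i * k i by ring]
        exact add_lt_add_of_lt_of_le hxA (hshift.trans hψ)
    _ = 2 * ψ := by ring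

lemma card_gridIndices_intDist_lt_le {n : ℕ} {a : Fin n → ℤ} (ha : a ≠ 0) {s K : ℝ}
    (hs : 0 < s) (hs₁ : s ≤ 1) (hK : (n : ℝ) ≤ K) (c : ℝ) :
    (#(gridIndices s {x : Fin n → ℝ | intDist (∑ i, a i * x i - c) < anorm a * K * s}) : ℝ) ≤
      (2 / s) ^ (n - 1) * ((4 * K + 1) * (4 * anorm a)) := by
  obtain ⟨i₀, hi₀⟩ := exists_abs_eq_anorm ha
  set A : ℝ := (anorm a : ℝ)
  have hA : 1 ≤ A := Nat.one_le_cast.2 (one_le_anorm ha)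
  have hK0 : 0 < K := lt_of_lt_of_le (by exact_mod_cast i₀.pos) hK
  set G := gridIndices s {x : Fin n → ℝ | intDist (∑ i, a i * x i - c) < A * K * s}
  set M := ⌈s⁻¹⌉₊
  have hM : (M : ℝ) ≤ 2 / s := by
    have h₁ : (M : ℝ) < s⁻¹ + 1 := Nat.ceil_lt_add_one (inv_nonneg.2 hs.le)
    have h₂ : 1 ≤ s⁻¹ := (one_le_inv₀ hs).2 hs₁
    rw [div_eq_mul_inv]; linarith
  have hα : |(a i₀ : ℝ) * s| = A * s := by rw [abs_mul, hi₀, abs_of_pos hs]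
  have hα0 : (a i₀ : ℝ) * s ≠ 0 := by rw [← abs_ne_zero, hα]; positivity
  have hgrid : ∀ k ∈ G, intDist (s * ∑ i, (a i : ℝ) * k i - c) < 2 * (A * K * s) :=
    fun k hk => intDist_sum_mul_lt_of_mem_gridIndices (abs_le_anorm a)
      (by rw [Fintype.card_fin, show A * K * s = K * (A * s) by ring]; gcongr) hk
  have hline : ∀ c' : ℝ, (#((Finset.Ico (0 : ℤ) M).filter fun t : ℤ =>
      intDist ((a i₀ : ℝ) * s * t + c') < 2 * (A * K * s)) : ℝ) ≤ (4 * K + 1) * (4 * A) := by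
    intro c'
    refine (card_filter_intDist_lt_le hα0 (by positivity) c' M).trans ?_
    have h₁ : 2 * (2 * (A * K * s)) / |(a i₀ : ℝ) * s| = 4 * K := by rw [hα]; field_simp; ring
    have h₂ : |(a i₀ : ℝ) * s| * M ≤ 2 * A := by
      calc |(a i₀ : ℝ) * s| * M ≤ A * s * (2 / s) := by rw [hα]; gcongr
        _ = 2 * A := by field_simp
    rw [h₁]; gcongr; linarith
  have hG : ∀ k ∈ G, ∀ i, k i ∈ Finset.Ico 0 (M : ℤ) := fun k hk => (mem_gridIndices.1 hk).1
  calc (#G : ℝ) ≤ M ^ (Fintype.card (Fin n) - 1) * ((4 * K + 1) * (4 * A)) :=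
        card_le_pow_mul_of_card_fiber_le hG i₀ (by positivity) fun q =>
          (Nat.cast_le.2 (card_fiber_le_card_filter_intDist hG hgrid i₀ q)).trans (hline _)
    _ ≤ (2 / s) ^ (n - 1) * ((4 * K + 1) * (4 * A)) := by
        rw [Fintype.card_fin]; gcongr

lemma card_gridIndices_forall_le_prod {κ ι : Type*} [Fintype κ] [Fintype ι] (s : ℝ)
    (A : κ → Set (ι → ℝ)) :
    #(gridIndices s {X : κ × ι → ℝ | ∀ j, (fun i => X (j, i)) ∈ A j}) ≤
      ∏ j, #(gridIndices s (A j)) := by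
  classical
  rw [← Fintype.card_piFinset]
  refine Finset.card_le_card_of_injOn Function.curry (fun k hk => ?_)
    Function.curry_injective.injOn
  obtain ⟨hk, X, hXk, hXA⟩ := mem_gridIndices.1 hk
  exact Fintype.mem_piFinset.2 fun j => mem_gridIndices.2
    ⟨fun i => hk (j, i), fun i => X (j, i), fun i _ => hXk (j, i) (Set.mem_univ _), hXA j⟩

section approximation

variable {n m : ℕ}

def approxSet (a : Fin n → ℤ) (b : Fin m → ℝ) (ψ : ℝ) : Set (Fin m × Fin n → ℝ) :=
  {X | ∀ j, intDist (∑ i, a i * X (j, i) - b j) < ψ}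

lemma card_gridIndices_approxSet_le {a : Fin n → ℤ} (ha : a ≠ 0) (b : Fin m → ℝ) {s K : ℝ}
    (hs : 0 < s) (hs₁ : s ≤ 1) (hK : (n : ℝ) ≤ K) :
    (#(gridIndices s (approxSet a b (anorm a * K * s))) : ℝ) ≤
      ((2 / s) ^ (n - 1) * ((4 * K + 1) * (4 * anorm a))) ^ m := by
  calc (#(gridIndices s (approxSet a b (anorm a * K * s))) : ℝ)
      ≤ ∏ j, (#(gridIndices s
          {x : Fin n → ℝ | intDist (∑ i, a i * x i - b j) < anorm a * K * s}) : ℝ) := by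
        exact_mod_cast card_gridIndices_forall_le_prod s
          fun j => {x : Fin n → ℝ | intDist (∑ i, a i * x i - b j) < anorm a * K * s}
    _ ≤ ∏ _j : Fin m, (2 / s) ^ (n - 1) * ((4 * K + 1) * (4 * anorm a)) :=
        Finset.prod_le_prod (fun _ _ => by positivity) fun j _ =>
          card_gridIndices_intDist_lt_le ha hs hs₁ hK (b j)
    _ = _ := by rw [Finset.prod_const, Finset.card_univ, Fintype.card_fin]

/- The cover of the approximation set with `ψ = |a| r`: grid cubes of side `r / (mn)`, so of
diameter at most `r`. -/
noncomputable def coverIndices (a : Fin n → ℤ) (b : Fin m → ℝ) (r : ℝ) :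
    Finset (Fin m × Fin n → ℤ) :=
  gridIndices (r / (m * n)) (approxSet a b (anorm a * r))

def coverCube (r : ℝ) (k : Fin m × Fin n → ℤ) : Set (EuclideanSpace ℝ (Fin m × Fin n)) :=
  WithLp.toLp 2 '' cube (r / (m * n)) k

noncomputable def coverConst (n m : ℕ) : ℝ :=
  ((2 * (m * n)) ^ (n - 1) * (4 * (4 * (m * n) + 1))) ^ m

lemma one_le_mul_dim_of_ne_zero {a : Fin n → ℤ} (ha : a ≠ 0) (hm : 0 < m) : (1 : ℝ) ≤ m * n := by
  obtain ⟨i, -⟩ := Function.ne_iff.1 ha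
  exact_mod_cast Nat.one_le_iff_ne_zero.2 (Nat.mul_ne_zero hm.ne' i.pos.ne')

lemma ediam_coverCube_le (r : ℝ) (k : Fin m × Fin n → ℤ) :
    Metric.ediam (coverCube r k) ≤ ENNReal.ofReal r := by
  refine (ediam_toLp_cube_le _ k).trans ?_
  rw [Fintype.card_prod, Fintype.card_fin, Fintype.card_fin, Nat.cast_mul]
  rcases eq_or_ne ((m : ℝ) * n) 0 with h | h
  · simp [h]
  · rw [mul_div_cancel₀ _ h]

lemma subset_iUnion_coverCube (hm : 0 < m) {a : Fin n → ℤ} (ha : a ≠ 0) (b : Fin m → ℝ)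
    (r : ℝ) :
    box n m ∩ WithLp.ofLp ⁻¹' approxSet a b (anorm a * r) ⊆
      ⋃ k : coverIndices a b r, coverCube r k := by
  rintro X ⟨hX, hXa⟩
  have hr : 0 < r := pos_of_mul_pos_right
    ((intDist_nonneg _).trans_lt (hXa ⟨0, hm⟩)) (Nat.cast_nonneg _)
  obtain ⟨hk, hXk⟩ := floor_div_mem_gridIndices
    (div_pos hr (zero_lt_one.trans_le (one_le_mul_dim_of_ne_zero ha hm))) hX hXa
  exact Set.mem_iUnion.2 ⟨⟨_, hk⟩, _, hXk, WithLp.toLp_ofLp _ _⟩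

lemma coverIndices_eq_empty_of_nonpos (hm : 0 < m) (a : Fin n → ℤ) (b : Fin m → ℝ) {r : ℝ}
    (hr : r ≤ 0) : coverIndices a b r = ∅ :=
  Finset.eq_empty_of_forall_notMem fun k hk => by
    obtain ⟨-, X, -, hX⟩ := mem_gridIndices.1 hk
    linarith [hX ⟨0, hm⟩, intDist_nonneg (∑ i, a i * X (⟨0, hm⟩, i) - b ⟨0, hm⟩),
      mul_nonpos_of_nonneg_of_nonpos (Nat.cast_nonneg (anorm a)) hr]

lemma card_coverIndices_mul_le {f g : ℝ → ℝ} (hf : IsDimFun f)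
    (hgdef : ∀ r > (0 : ℝ), g r = f r / r ^ ((n - 1) * m)) (hm : 0 < m) {a : Fin n → ℤ}
    (ha : a ≠ 0) (b : Fin m → ℝ) {r : ℝ} (hr₀ : 0 < r) (hr₁ : r ≤ 1) :
    (#(coverIndices a b r) : ℝ) * f r ≤ coverConst n m * (g r * anorm a ^ m) := by
  set K : ℝ := m * n with hK
  set A : ℝ := (anorm a : ℝ)
  have hK₁ : 1 ≤ K := one_le_mul_dim_of_ne_zero ha hm
  set s := r / K
  have hs : 0 < s := by positivity
  have hKs : K * s = r := mul_div_cancel₀ r (by positivity)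
  have hcount := card_gridIndices_approxSet_le ha b hs ((div_le_self hr₀.le hK₁).trans hr₁)
    (show (n : ℝ) ≤ K from le_mul_of_one_le_left (Nat.cast_nonneg n) (by exact_mod_cast hm))
  rw [mul_assoc, hKs] at hcount
  -- `f r = g r r^((n-1)m)`, and `(2/s)^(n-1) r^(n-1) = (2K)^(n-1)`: the powers of `r` cancel.
  calc (#(coverIndices a b r) : ℝ) * f r
      ≤ ((2 / s) ^ (n - 1) * ((4 * K + 1) * (4 * A))) ^ m * (g r * r ^ ((n - 1) * m)) := by
        rw [hgdef r hr₀, div_mul_cancel₀ _ (by positivity)]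
        exact mul_le_mul_of_nonneg_right hcount (hf.2.2.1 r hr₀.le)
    _ = ((2 / s * r) ^ (n - 1) * (4 * (4 * K + 1))) ^ m * (g r * A ^ m) := by
        simp only [pow_mul r, mul_pow]; ring
    _ = coverConst n m * (g r * A ^ m) := by
        rw [coverConst, show 2 / s * r = 2 * K by rw [← hKs]; field_simp]

lemma sum_ofReal_ediam_coverCube_le {f g : ℝ → ℝ} (hf : IsDimFun f)
    (hgdef : ∀ r > (0 : ℝ), g r = f r / r ^ ((n - 1) * m)) (hm : 0 < m) {a : Fin n → ℤ}
    (ha : a ≠ 0) (b : Fin m → ℝ) {r : ℝ} (hr₁ : r ≤ 1) :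
    ∑ k ∈ coverIndices a b r, ENNReal.ofReal (f (Metric.ediam (coverCube r k)).toReal) ≤
      ENNReal.ofReal (coverConst n m) * ENNReal.ofReal (g r * anorm a ^ m) := by
  rcases le_or_gt r 0 with hr₀ | hr₀
  · simp [coverIndices_eq_empty_of_nonpos hm a b hr₀]
  have hterm : ∀ k : Fin m × Fin n → ℤ, ENNReal.ofReal (f (Metric.ediam (coverCube r k)).toReal) ≤
      ENNReal.ofReal (f r) := fun k =>
    ENNReal.ofReal_le_ofReal <| hf.2.1 ENNReal.toReal_nonneg hr₀.le <|
      ENNReal.toReal_le_of_le_ofReal hr₀.le (ediam_coverCube_le r k)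
  calc ∑ k ∈ coverIndices a b r, ENNReal.ofReal (f (Metric.ediam (coverCube r k)).toReal)
      ≤ ∑ _k ∈ coverIndices a b r, ENNReal.ofReal (f r) := Finset.sum_le_sum fun k _ => hterm k
    _ = ENNReal.ofReal (#(coverIndices a b r) * f r) := by
        rw [Finset.sum_const, nsmul_eq_mul, ENNReal.ofReal_mul (Nat.cast_nonneg _),
          ENNReal.ofReal_natCast]
    _ ≤ ENNReal.ofReal (coverConst n m * (g r * anorm a ^ m)) :=
        ENNReal.ofReal_le_ofReal (card_coverIndices_mul_le hf hgdef hm ha b hr₀ hr₁)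
    _ = _ := ENNReal.ofReal_mul (by unfold coverConst; positivity)

lemma Filter.Eventually.atTop_forall_notMem_finset {α : Type*} {p : α → Prop}
    (h : ∀ᶠ a in cofinite, p a) : ∀ᶠ F : Finset α in atTop, ∀ a ∉ F, p a := by
  filter_upwards [eventually_ge_atTop (eventually_cofinite.1 h).toFinset] with F hF a haF
  by_contra hpa
  exact haF (hF (by simpa using hpa))

theorem MeasureTheory.Measure.mkMetric_setOf_infinite_eq_zero {X α : Type*} [EMetricSpace X]
    [MeasurableSpace X] [BorelSpace X] [Countable α] {ι : α → Type*} [∀ a, Countable (ι a)]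
    (μ : ℝ≥0∞ → ℝ≥0∞) {E : α → Set X} {t : ∀ a, ι a → Set X} {u : α → ℝ≥0∞}
    (hE : ∀ᶠ a in Filter.cofinite, E a ⊆ ⋃ i, t a i)
    (ht : Tendsto (fun a => ⨆ i, Metric.ediam (t a i)) Filter.cofinite (𝓝 0))
    (htu : ∀ᶠ a in Filter.cofinite, ∑' i, μ (Metric.ediam (t a i)) ≤ u a) (hu : ∑' a, u a ≠ ∞) :
    mkMetric μ {x | {a | x ∈ E a}.Infinite} = 0 := by
  -- At level `F`, cover by the pieces `t a i` with `a ∉ F`.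
  set T : ∀ F : Finset α, (Σ a : {a // a ∉ F}, ι a) → Set X := fun _ p => t p.1 p.2
  have hr : Tendsto (fun F : Finset α => ⨆ a : {a // a ∉ F}, ⨆ i, Metric.ediam (t a i))
      atTop (𝓝 0) := by
    refine ENNReal.tendsto_nhds_zero.2 fun ε hε => ?_
    filter_upwards [(ENNReal.tendsto_nhds_zero.1 ht ε hε).atTop_forall_notMem_finset]
      with F hF using iSup_le fun a => hF a a.2
  have hT : ∀ F p, Metric.ediam (T F p) ≤ ⨆ a : {a // a ∉ F}, ⨆ i, Metric.ediam (t a i) :=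
    fun F p => le_iSup_of_le p.1 (le_iSup (fun i => Metric.ediam (t p.1 i)) p.2)
  have hcover : ∀ᶠ F in atTop, {x | {a | x ∈ E a}.Infinite} ⊆ ⋃ p, T F p := by
    filter_upwards [hE.atTop_forall_notMem_finset] with F hF x hx
    obtain ⟨a, hxa, haF⟩ := (hx.sdiff F.finite_toSet).nonempty
    obtain ⟨i, hi⟩ := Set.mem_iUnion.1 (hF a haF hxa)
    exact Set.mem_iUnion.2 ⟨⟨⟨a, haF⟩, i⟩, hi⟩
  have hsum : ∀ᶠ F in atTop, ∑' p, μ (Metric.ediam (T F p)) ≤ ∑' a : {a // a ∉ F}, u a := by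
    filter_upwards [htu.atTop_forall_notMem_finset] with F hF
    rw [ENNReal.tsum_sigma']
    exact ENNReal.tsum_le_tsum fun a => hF a a.2
  refine le_antisymm ?_ bot_le
  calc mkMetric μ {x | {a | x ∈ E a}.Infinite}
      ≤ liminf (fun F => ∑' p, μ (Metric.ediam (T F p))) atTop :=
        mkMetric_le_liminf_tsum _ _ hr T (Eventually.of_forall hT) hcover μ
    _ ≤ liminf (fun F => ∑' a : {a // a ∉ F}, u a) atTop := liminf_le_liminf hsum
    _ = 0 := (ENNReal.tendsto_tsum_compl_atTop_zero hu).liminf_eq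

lemma tendsto_ofReal_div_anorm_cofinite {Ψ : (Fin n → ℤ) → ℝ}
    (hΨ : ∀ ε > (0:ℝ), ∃ N : ℕ, ∀ a : Fin n → ℤ, N ≤ anorm a → Ψ a < ε) :
    Tendsto (fun a => ENNReal.ofReal (Ψ a / anorm a)) cofinite (𝓝 0) := by
  refine ENNReal.tendsto_nhds_zero.2 fun ε hε => ?_
  rcases eq_or_ne ε ∞ with rfl | hε_top
  · exact Eventually.of_forall fun _ => le_top
  obtain ⟨N, hN⟩ := hΨ ε.toReal (ENNReal.toReal_pos hε.ne' hε_top)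
  filter_upwards [tendsto_anorm_cofinite.eventually_ge_atTop (max N 1)] with a ha
  have hA : (1 : ℝ) ≤ anorm a := by exact_mod_cast (le_max_right _ _).trans ha
  refine ENNReal.ofReal_le_of_le_toReal
    (div_le_of_le_mul₀ (by positivity) ENNReal.toReal_nonneg ?_)
  calc Ψ a ≤ ε.toReal := (hN a ((le_max_left _ _).trans ha)).le
    _ ≤ ε.toReal * anorm a := le_mul_of_one_le_right ENNReal.toReal_nonneg hA

lemma W_subset_setOf_infinite (b : Fin m → ℝ) (Ψ : (Fin n → ℤ) → ℝ) :
    W n m b Ψ ⊆ {X | {a | X ∈ box n m ∩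
      WithLp.ofLp ⁻¹' approxSet a b (anorm a * (Ψ a / anorm a))}.Infinite} := by
  rintro X ⟨hX, hXinf⟩
  refine (hXinf.sdiff (Set.finite_singleton 0)).mono fun a ha => ⟨hX, ?_⟩
  rw [Set.mem_preimage, mul_div_cancel₀ _ (by positivity [one_le_anorm ha.2])]
  exact ha.1

end approximation

theorem stmt6_general {n m : ℕ} (hm : 0 < m) (b : Fin m → ℝ)
    (Ψ : (Fin n → ℤ) → ℝ)
    (hΨlim : ∀ ε > (0:ℝ), ∃ N : ℕ, ∀ a : Fin n → ℤ, N ≤ anorm a → Ψ a < ε)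
    (f g : ℝ → ℝ) (hf : IsDimFun f)
    (hgdef : ∀ r > (0:ℝ), g r = f r / r ^ ((n - 1) * m))
    (hconv : ∑' a : {a : Fin n → ℤ // a ≠ 0},
        ENNReal.ofReal (g (Ψ a.1 / (anorm a.1 : ℝ)) * (anorm a.1 : ℝ) ^ m) ≠ ⊤) :
    hMeasure f (W n m b Ψ) = 0 := by
  set r : (Fin n → ℤ) → ℝ := fun a => Ψ a / anorm a
  have hr := tendsto_ofReal_div_anorm_cofinite hΨlim
  have hr₁ : ∀ᶠ a in cofinite, r a ≤ 1 :=
    (hr.eventually (gt_mem_nhds zero_lt_one)).mono fun a ha => (ENNReal.ofReal_lt_one.1 ha).le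
  refine measure_mono_null (W_subset_setOf_infinite b Ψ)
    (Measure.mkMetric_setOf_infinite_eq_zero _ (t := fun a (k : coverIndices a b (r a)) =>
      coverCube (r a) k) (u := fun a => ENNReal.ofReal (coverConst n m) *
        ENNReal.ofReal (g (r a) * anorm a ^ m)) ?_ ?_ ?_ ?_)
  · filter_upwards [eventually_cofinite_ne 0] with a ha using subset_iUnion_coverCube hm ha b _
  · exact tendsto_of_tendsto_of_tendsto_of_le_of_le tendsto_const_nhds hr (fun _ => zero_le)
      fun a => iSup_le fun k => ediam_coverCube_le _ _
  · filter_upwards [eventually_cofinite_ne 0, hr₁] with a ha hra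
    rw [Finset.tsum_subtype (coverIndices a b (r a))
      fun k => ENNReal.ofReal (f (Metric.ediam (coverCube (r a) k)).toReal)]
    exact sum_ofReal_ediam_coverCube_le hf hgdef hm ha b hra
  · rw [ENNReal.tsum_mul_left]
    refine ENNReal.mul_ne_top ENNReal.ofReal_ne_top ?_
    rw [← tsum_subtype_eq_of_support_subset (s := {a | a ≠ 0}) fun a ha h0 => ha ?_]
    · exact hconv
    · simp [h0, anorm_zero, zero_pow hm.ne']

theorem stmt6 {n m : ℕ} (hn : 0 < n) (hm : 0 < m) (b : Fin m → ℝ)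
    (Ψ : (Fin n → ℤ) → ℝ) (hΨ0 : ∀ a, 0 ≤ Ψ a)
    (hΨlim : ∀ ε > (0:ℝ), ∃ N : ℕ, ∀ a : Fin n → ℤ, N ≤ anorm a → Ψ a < ε)
    (f g : ℝ → ℝ) (hf : IsDimFun f) (hg : IsDimFun g)
    (hgdef : ∀ r > (0:ℝ), g r = f r / r ^ ((n - 1) * m))
    (hconv : ∑' a : {a : Fin n → ℤ // a ≠ 0},
        ENNReal.ofReal (g (Ψ a.1 / (anorm a.1 : ℝ)) * (anorm a.1 : ℝ) ^ m) ≠ ⊤) :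
    hMeasure f (W n m b Ψ) = 0 :=
  stmt6_general hm b Ψ hΨlim f g hf hgdef hconv
end
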